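/- Let p be a prime, q = p^d, and let G ≤ AΓL(1,q) act 2-transitively on F_q. Let s be the smallest positive integer such that t(a,s) ∈ G_0 for some a ∈ F_q^×, m the smallest positive integer such that t(1,ms) ∈ G_0, and H := {a ∈ F_q^× : t(a,0) ∈ G_0}. Let ξ be a generator of F_q^× and ℓ a positive integer coprime to m such that {a ∈ F_q^× : t(a,s) ∈ G_0} = Hξ^ℓ. Then a subset P of F_q^× containing 1 is an imprimitive block of G_0 on F_q^× if and only if either P is a subgroup of F_q^×, or there exist an integer n ≥ 0, a divisor e of m and a subgroup K of H such that, setting φ := (z ↦ z^{p^s}), ψ := (z ↦ z^{p^{es}}), j := nm + ℓ[φ,e] and w := ξ^j, the index |H|/|K| divides j[ψ, m/e]/m and P = K ∪ w^{[ψ,1]}K ∪ w^{[ψ,2]}K ∪ ⋯ ∪ w^{[ψ, m/e − 1]}K. -/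

import Mathlib

/-!
Write `F^× = ⟨ξ⟩`, `Q = q - 1`, `x = p ^ s`, and identify `ξ ^ n` with `n mod Q`.

The Frobenius exponents occurring in `G₀` are the multiples of `s`, `t(1, k s) ∈ G` iff `m ∣ k`,
and `{a | t(a, k s) ∈ G} = H ξ ^ (l [x, k])`. Transitivity of `G₀` on `F^×` and minimality of `m`
force `H = ⟨ξ ^ m⟩`, by counting the classes `l [x, k]` modulo `|F^× : H|`. So `G₀` consists of
the maps `z ↦ ξ ^ c z ^ (x ^ k)` with `c ≡ l [x, k] (mod m)`, acting on exponents by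
`n ↦ c + x ^ k n`.

A block `P ∋ 1` is the orbit of `1` under its stabilizer `S`. The Frobenius parts of `S` are the
multiples of some `e ∣ m`, the elements of `S` with trivial Frobenius part are the translations by
the multiples of some `m r ∣ Q` (this is `K`), and if `j` is the constant of an element of `S` with
Frobenius part `e`, its powers sweep out the classes `j [x ^ e, i]` modulo `m r`; comparing with the
identity at Frobenius part `m` gives `m r ∣ j [x ^ e, m / e]`. Conversely, for such a union of
classes `j x ^ a mod m r` only depends on `a mod m`, so an element of `G₀` moving one class into
the union moves all of them into it. Subgroups of `F^×` are blocks since semilinear maps permute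
their cosets.
-/

/-- `scalarFrob G p a k` says that the map t(a,k) : z ↦ a·z^{p^k} belongs to G
(as a permutation of the field; such a map automatically fixes 0). -/
def scalarFrob {F : Type*} [Field F] (G : Subgroup (Equiv.Perm F)) (p : ℕ)
    (a : F) (k : ℕ) : Prop :=
  ∃ g ∈ G, ∀ z : F, g z = a * z ^ p ^ k

namespace AGammaL1

open Finset

/-- The paper's `[δ, i] = (x ^ i - 1) / (x - 1)` for `δ = (z ↦ z ^ x)`, written without division. -/
def geomSum (x i : ℕ) : ℕ := ∑ k ∈ range i, x ^ k

@[simp] lemma geomSum_zero (x : ℕ) : geomSum x 0 = 0 := rfl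

lemma geomSum_succ (x i : ℕ) : geomSum x (i + 1) = geomSum x i + x ^ i :=
  sum_range_succ _ _

lemma geomSum_add (x a b : ℕ) : geomSum x (a + b) = geomSum x a + x ^ a * geomSum x b := by
  simp only [geomSum, sum_range_add, pow_add, mul_sum]

lemma geomSum_succ' (x i : ℕ) : geomSum x (i + 1) = 1 + x * geomSum x i := by
  rw [add_comm, geomSum_add, pow_one]; rfl

lemma geomSum_mul (x e i : ℕ) : geomSum x (e * i) = geomSum x e * geomSum (x ^ e) i := by
  induction i with
  | zero => simp
  | succ i ih => rw [mul_add_one, geomSum_add, ih, geomSum_succ, ← pow_mul]; ring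

lemma geomSum_mul_sub_one_add_one {x : ℕ} (hx : 0 < x) (i : ℕ) :
    geomSum x i * (x - 1) + 1 = x ^ i := by
  have := geom_sum_mul_add (x - 1) i
  rwa [Nat.sub_one_add_one hx.ne'] at this

lemma geomSum_eq_div {x : ℕ} (hx : 2 ≤ x) (i : ℕ) : geomSum x i = (x ^ i - 1) / (x - 1) :=
  Nat.geomSum_eq hx i

lemma geomSum_modEq_iff {x c l m : ℕ} (hx : Nat.Coprime x c)
    (h : ∀ u, c ∣ l * geomSum x u ↔ m ∣ u) {a b : ℕ} :
    l * geomSum x a ≡ l * geomSum x b [MOD c] ↔ a ≡ b [MOD m] := by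
  wlog hab : a ≤ b generalizing a b
  · exact Nat.ModEq.comm.trans ((this (le_of_not_ge hab)).trans Nat.ModEq.comm)
  obtain ⟨u, rfl⟩ := Nat.exists_eq_add_of_le hab
  rw [geomSum_add, mul_add, mul_left_comm, Nat.left_modEq_add_iff, Nat.left_modEq_add_iff,
    (hx.pow_left a).symm.dvd_mul_left, h]

lemma coprime_of_pow_modEq_one {x Q D : ℕ} (hD : 0 < D) (h : x ^ D ≡ 1 [MOD Q]) :
    Nat.Coprime x Q := by
  have := h.gcd_eq
  rwa [Nat.gcd_one_left, ← Nat.Coprime, Nat.coprime_pow_left_iff hD] at this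

lemma geomSum_modEq_mod {y j M u : ℕ} (h : M ∣ j * geomSum y u) (i : ℕ) :
    j * geomSum y i ≡ j * geomSum y (i % u) [MOD M] := by
  conv_lhs => rw [← Nat.mod_add_div i u]
  induction i / u with
  | zero => rfl
  | succ w ih =>
    refine Nat.ModEq.trans ?_ ih
    rw [mul_add_one, ← add_assoc, geomSum_add, mul_add, Nat.add_modEq_left_iff, mul_left_comm]
    exact Dvd.dvd.mul_left h _

lemma exists_mem_iff_dvd {Q : ℕ} {T : Set ℕ} (hQ : 0 < Q)
    (hmod : ∀ a b, a ≡ b [MOD Q] → a ∈ T → b ∈ T) (h0 : 0 ∈ T)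
    (hadd : ∀ a ∈ T, ∀ b ∈ T, a + b ∈ T) :
    ∃ c, 0 < c ∧ c ∣ Q ∧ ∀ n, n ∈ T ↔ c ∣ n := by
  classical
  have hmul : ∀ a ∈ T, ∀ t, a * t ∈ T := by
    intro a ha t
    induction t with
    | zero => simpa using h0
    | succ t ih => rw [mul_add_one]; exact hadd _ ih _ ha
  have hQT : Q ∈ T := hmod 0 Q (Nat.modEq_zero_iff_dvd.mpr dvd_rfl).symm h0
  have hex : ∃ k, 0 < k ∧ k ∈ T := ⟨Q, hQ, hQT⟩
  obtain ⟨hc, hcT⟩ := Nat.find_spec hex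
  have hdvd : ∀ n ∈ T, Nat.find hex ∣ n := by
    intro n hn
    set c := Nat.find hex
    -- `n + c * ((Q - 1) * (n / c)) ≡ n % c [MOD Q]`
    have hrem : n % c ∈ T := by
      refine hmod _ _ ?_ (hadd _ hn _ (hmul _ hcT ((Q - 1) * (n / c))))
      have : n + c * ((Q - 1) * (n / c)) = n % c + Q * (c * (n / c)) := by
        have h := Nat.mod_add_div n c
        obtain ⟨Q', rfl⟩ : ∃ Q', Q = Q' + 1 := ⟨Q - 1, by omega⟩
        rw [Nat.add_sub_cancel]
        nth_rewrite 1 [← h]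
        ring
      rw [this]
      exact Nat.add_modulus_mul_modEq_iff.mpr rfl
    by_contra hnd
    exact Nat.find_min hex (Nat.mod_lt n hc)
      ⟨Nat.pos_of_ne_zero (mt Nat.dvd_of_mod_eq_zero hnd), hrem⟩
  exact ⟨_, hc, hdvd Q hQT, fun n => ⟨hdvd n, fun ⟨t, ht⟩ => ht ▸ hmul _ hcT t⟩⟩

lemma eq_of_bijective_mod {f : ℕ → ℕ} {m c : ℕ} (hc : 0 < c)
    (hinj : ∀ k < m, ∀ k' < m, f k ≡ f k' [MOD c] → k = k')
    (hsurj : ∀ n, ∃ k < m, f k ≡ n [MOD c]) : m = c := by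
  have hle : m ≤ c := by
    simpa using Finset.card_le_card_of_injOn (s := range m) (t := range c) (fun k => f k % c)
      (fun k _ => by simpa using Nat.mod_lt _ hc)
      (fun k hk k' hk' h => hinj k (by simpa using hk) k' (by simpa using hk') h)
  have hge : c ≤ m := by
    simpa using Finset.card_le_card_of_surjOn (s := range m) (t := range c) (fun k => f k % c)
      (fun n hn => by
        obtain ⟨k, hk, hkn⟩ := hsurj n
        exact ⟨k, by simpa using hk,
          by simpa [Nat.ModEq, Nat.mod_eq_of_lt (by simpa using hn)] using hkn⟩)
  omega

/-- The numerical data of `G₀` in exponent coordinates, with `Q = q - 1`, `x = p ^ s` and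
`D = d / s`; `exists_modEq` is the transitivity of `G₀` on `F^×`. -/
structure ExponentModel (x Q m l D : ℕ) : Prop where
  Q_pos : 0 < Q
  m_pos : 0 < m
  D_pos : 0 < D
  x_pos : 0 < x
  m_dvd_Q : m ∣ Q
  m_dvd_D : m ∣ D
  pow_modEq_one : x ^ D ≡ 1 [MOD Q]
  dvd_geomSum_iff : ∀ k, m ∣ l * geomSum x k ↔ m ∣ k
  exists_modEq : ∀ n, ∃ k c, c ≡ l * geomSum x k [MOD m] ∧ c ≡ n [MOD Q]

def IsExpBlock (x m l : ℕ) (A : Set ℕ) : Prop :=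
  ∀ k c, c ≡ l * geomSum x k [MOD m] →
    (∀ n ∈ A, c + x ^ k * n ∈ A) ∨ ∀ n ∈ A, c + x ^ k * n ∉ A

/-- The exponents of `⋃ i < m / e, ξ ^ (j [x ^ e, i]) K` with `K = ⟨ξ ^ (m r)⟩`, `|H : K| = r`. -/
def IsExpCanonical (x Q m l : ℕ) (A : Set ℕ) : Prop :=
  ∃ e, 0 < e ∧ e ∣ m ∧ ∃ r, 0 < r ∧ m * r ∣ Q ∧ ∃ n₀ j, j = n₀ * m + l * geomSum x e ∧
    r ∣ j * geomSum (x ^ e) (m / e) / m ∧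
    ∀ n, n ∈ A ↔ ∃ i < m / e, n ≡ j * geomSum (x ^ e) i [MOD m * r]

/-- The elements of `G₀` with Frobenius part `x ^ k` mapping `A` into itself, by their constants. -/
def stabShifts (x m l : ℕ) (A : Set ℕ) (k : ℕ) : Set ℕ :=
  {c | c ≡ l * geomSum x k [MOD m] ∧ ∀ n ∈ A, c + x ^ k * n ∈ A}

section ExponentModel

variable {x Q m l D : ℕ} {A : Set ℕ}

lemma zero_mem_stabShifts_zero : 0 ∈ stabShifts x m l A 0 :=
  ⟨rfl, fun n hn => by simpa using hn⟩

lemma add_mem_stabShifts {k k' c c' : ℕ} (hc : c ∈ stabShifts x m l A k)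
    (hc' : c' ∈ stabShifts x m l A k') : c + x ^ k * c' ∈ stabShifts x m l A (k + k') := by
  refine ⟨?_, fun n hn => ?_⟩
  · rw [geomSum_add, mul_add, mul_left_comm]
    exact hc.1.add (hc'.1.mul_left _)
  · convert hc.2 _ (hc'.2 n hn) using 1
    ring

namespace ExponentModel

lemma coprime (h : ExponentModel x Q m l D) : Nat.Coprime x Q :=
  coprime_of_pow_modEq_one h.D_pos h.pow_modEq_one

lemma geomSum_modEq_iff (h : ExponentModel x Q m l D) {a b : ℕ} :
    l * geomSum x a ≡ l * geomSum x b [MOD m] ↔ a ≡ b [MOD m] :=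
  AGammaL1.geomSum_modEq_iff (h.coprime.coprime_dvd_right h.m_dvd_Q) h.dvd_geomSum_iff

lemma pow_modEq_pow (h : ExponentModel x Q m l D) {k k' : ℕ} (hk : k ≡ k' [MOD D]) :
    x ^ k ≡ x ^ k' [MOD Q] := by
  wlog hkk : k ≤ k' generalizing k k'
  · exact (this hk.symm (le_of_not_ge hkk)).symm
  obtain ⟨t, rfl⟩ := (Nat.modEq_iff_exists_eq_add hkk).mp hk
  rw [pow_add, pow_mul]
  simpa using ((h.pow_modEq_one.pow t).mul_left (x ^ k)).symm

lemma mem_stabShifts_of_modEq (h : ExponentModel x Q m l D)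
    (hA : ∀ a b, a ≡ b [MOD Q] → a ∈ A → b ∈ A) {k k' c c' : ℕ}
    (hc : c ∈ stabShifts x m l A k) (hcc : c ≡ c' [MOD Q]) (hkk : k ≡ k' [MOD D]) :
    c' ∈ stabShifts x m l A k' :=
  ⟨(hcc.of_dvd h.m_dvd_Q).symm.trans
      (hc.1.trans (h.geomSum_modEq_iff.mpr (hkk.of_dvd h.m_dvd_D))),
    fun n hn => hA _ _ (hcc.add ((h.pow_modEq_pow hkk).mul_right n)) (hc.2 n hn)⟩

/-- Composing both with a shift whose Frobenius part is inverse modulo `D` lands in the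
`k = 0` slice. -/
lemma modEq_of_mem_stabShifts (h : ExponentModel x Q m l D)
    (hA : ∀ a b, a ≡ b [MOD Q] → a ∈ A → b ∈ A) {e M : ℕ}
    (hSe : ∀ k, (stabShifts x m l A k).Nonempty ↔ e ∣ k)
    (hS0 : ∀ c, c ∈ stabShifts x m l A 0 ↔ M ∣ c) {k c c' : ℕ}
    (hc : c ∈ stabShifts x m l A k) (hc' : c' ∈ stabShifts x m l A k) : c ≡ c' [MOD M] := by
  obtain ⟨c'', hc''⟩ := (hSe ((D - 1) * k)).mpr (((hSe k).mp ⟨c, hc⟩).mul_left _)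
  have hkk' : k + (D - 1) * k ≡ 0 [MOD D] :=
    Nat.modEq_zero_iff_dvd.mpr
      ⟨k, by rw [← one_add_mul, add_comm 1, Nat.sub_one_add_one h.D_pos.ne']⟩
  have key : ∀ {b}, b ∈ stabShifts x m l A k → b + x ^ k * c'' ≡ 0 [MOD M] := fun hb =>
    Nat.modEq_zero_iff_dvd.mpr
      ((hS0 _).mp (h.mem_stabShifts_of_modEq hA (add_mem_stabShifts hb hc'') rfl hkk'))
  exact Nat.ModEq.add_right_cancel' _ ((key hc).trans (key hc').symm)

lemma zero_mem_stabShifts_self (h : ExponentModel x Q m l D) (h0 : 0 ∈ A)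
    (hL : IsExpBlock x m l A) : 0 ∈ stabShifts x m l A m := by
  have hadm : 0 ≡ l * geomSum x m [MOD m] :=
    (Nat.modEq_zero_iff_dvd.mpr ((h.dvd_geomSum_iff m).mpr dvd_rfl)).symm
  exact ⟨hadm, (hL m 0 hadm).resolve_right fun hdis => hdis 0 h0 (by simpa using h0)⟩

/-- A block is the orbit of any of its points under its stabilizer, `G₀` being transitive. -/
lemma mem_iff_exists_stabShifts (h : ExponentModel x Q m l D)
    (hA : ∀ a b, a ≡ b [MOD Q] → a ∈ A → b ∈ A) (h0 : 0 ∈ A) (hL : IsExpBlock x m l A) {n : ℕ} :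
    n ∈ A ↔ ∃ k c, c ∈ stabShifts x m l A k ∧ c ≡ n [MOD Q] := by
  constructor
  · intro hn
    obtain ⟨k, c, hadm, hcn⟩ := h.exists_modEq n
    refine ⟨k, c, ⟨hadm, (hL k c hadm).resolve_right fun hdis => hdis 0 h0 ?_⟩, hcn⟩
    simpa using hA _ _ hcn.symm hn
  · rintro ⟨k, c, hc, hcn⟩
    exact hA _ _ hcn (by simpa using hc.2 0 h0)

lemma mul_geomSum_mem_stabShifts {e j : ℕ} (hj : j ∈ stabShifts x m l A e) (i : ℕ) :
    j * geomSum (x ^ e) i ∈ stabShifts x m l A (e * i) := by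
  induction i with
  | zero => exact zero_mem_stabShifts_zero
  | succ i ih =>
    convert add_mem_stabShifts hj ih using 2
    · ring
    · rw [geomSum_succ']; ring

lemma mem_iff_modEq_mul_geomSum (h : ExponentModel x Q m l D)
    (hA : ∀ a b, a ≡ b [MOD Q] → a ∈ A → b ∈ A) (h0 : 0 ∈ A) (hL : IsExpBlock x m l A)
    {e M j : ℕ} (hSe : ∀ k, (stabShifts x m l A k).Nonempty ↔ e ∣ k)
    (hS0 : ∀ c, c ∈ stabShifts x m l A 0 ↔ M ∣ c) (hMQ : M ∣ Q)
    (hj : j ∈ stabShifts x m l A e) {n : ℕ} :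
    n ∈ A ↔ ∃ i, n ≡ j * geomSum (x ^ e) i [MOD M] := by
  rw [h.mem_iff_exists_stabShifts hA h0 hL]
  constructor
  · rintro ⟨k, c, hc, hcn⟩
    obtain ⟨i, rfl⟩ := (hSe k).mp ⟨c, hc⟩
    exact ⟨i, (hcn.of_dvd hMQ).symm.trans
      (h.modEq_of_mem_stabShifts hA hSe hS0 hc (mul_geomSum_mem_stabShifts hj i))⟩
  · rintro ⟨i, hi⟩
    set b := j * geomSum (x ^ e) i
    -- `n + Q * b` is `b` plus a multiple of `M`, and translations by `M ℕ` preserve `A`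
    obtain ⟨t, ht⟩ := (Nat.modEq_iff_exists_eq_add
      (le_add_left (Nat.le_mul_of_pos_left b h.Q_pos))).mp
      ((Nat.add_modulus_mul_modEq_iff.mpr rfl).of_dvd hMQ |>.trans hi).symm
    refine ⟨0 + e * i, M * t + x ^ 0 * b,
      add_mem_stabShifts ((hS0 _).mpr (dvd_mul_right M t)) (mul_geomSum_mem_stabShifts hj i), ?_⟩
    rw [pow_zero, one_mul, add_comm, ← ht]
    exact Nat.add_modulus_mul_modEq_iff.mpr rfl

theorem isExpCanonical_of_isExpBlock (h : ExponentModel x Q m l D)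
    (hA : ∀ a b, a ≡ b [MOD Q] → a ∈ A → b ∈ A) (h0 : 0 ∈ A) (hL : IsExpBlock x m l A) :
    IsExpCanonical x Q m l A := by
  set S := stabShifts x m l A
  obtain ⟨e, he, -, hSe⟩ : ∃ e, 0 < e ∧ e ∣ D ∧ ∀ k, (S k).Nonempty ↔ e ∣ k :=
    exists_mem_iff_dvd (T := {k | (S k).Nonempty}) h.D_pos
      (fun k k' hkk' ⟨c, hc⟩ => ⟨c, h.mem_stabShifts_of_modEq hA hc rfl hkk'⟩)
      ⟨0, zero_mem_stabShifts_zero⟩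
      (fun k ⟨c, hc⟩ k' ⟨c', hc'⟩ => ⟨_, add_mem_stabShifts hc hc'⟩)
  obtain ⟨M, hM, hMQ, hS0⟩ : ∃ M, 0 < M ∧ M ∣ Q ∧ ∀ c, c ∈ S 0 ↔ M ∣ c :=
    exists_mem_iff_dvd h.Q_pos (fun c c' hcc' hc => h.mem_stabShifts_of_modEq hA hc hcc' rfl)
      zero_mem_stabShifts_zero (fun c hc c' hc' => by simpa using add_mem_stabShifts hc hc')
  have hSm := h.zero_mem_stabShifts_self h0 hL
  have hem : e ∣ m := (hSe m).mp ⟨0, hSm⟩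
  obtain ⟨r, rfl⟩ : m ∣ M := by
    simpa [Nat.modEq_zero_iff_dvd] using ((hS0 M).mpr dvd_rfl).1
  obtain ⟨c₁, hc₁⟩ := (hSe e).mpr dvd_rfl
  -- lift a shift with Frobenius part `e` above `l * [x, e]` to write it as `n₀ * m + l * [x, e]`
  set j := c₁ + Q * (l * geomSum x e)
  have hj : j ∈ S e :=
    h.mem_stabShifts_of_modEq hA hc₁ (Nat.add_modulus_mul_modEq_iff.mpr rfl).symm rfl
  obtain ⟨n₀, hn₀⟩ : ∃ n₀, j = l * geomSum x e + m * n₀ :=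
    (Nat.modEq_iff_exists_eq_add (le_add_left (Nat.le_mul_of_pos_left _ h.Q_pos))).mp hj.1.symm
  have hjm : m * r ∣ j * geomSum (x ^ e) (m / e) := by
    have hjS := mul_geomSum_mem_stabShifts hj (m / e)
    rw [Nat.mul_div_cancel' hem] at hjS
    exact Nat.modEq_zero_iff_dvd.mp (h.modEq_of_mem_stabShifts hA hSe hS0 hjS hSm)
  refine ⟨e, he, hem, r, Nat.pos_of_mul_pos_left hM, hMQ, n₀, j, by rw [hn₀]; ring, ?_,
    fun n => ?_⟩
  · obtain ⟨w, hw⟩ := hjm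
    exact ⟨w, by rw [hw, mul_assoc, Nat.mul_div_cancel_left _ h.m_pos]⟩
  · rw [h.mem_iff_modEq_mul_geomSum hA h0 hL hSe hS0 hMQ hj]
    have hu : 0 < m / e := Nat.div_pos (Nat.le_of_dvd h.m_pos hem) he
    exact ⟨fun ⟨i, hi⟩ => ⟨i % (m / e), Nat.mod_lt i hu, hi.trans (geomSum_modEq_mod hjm i)⟩,
      fun ⟨i, _, hi⟩ => ⟨i, hi⟩⟩

lemma mul_pow_modEq_of_dvd {e j M u : ℕ} (hx : 0 < x) (hM : M ∣ j * geomSum (x ^ e) u) {a b : ℕ}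
    (hab : a ≡ b [MOD e * u]) : j * x ^ a ≡ j * x ^ b [MOD M] := by
  -- `j * x ^ (e * u) = j * [x ^ e, u] * (x ^ e - 1) + j`
  have hper : j * x ^ (e * u) ≡ j [MOD M] := by
    rw [pow_mul, ← geomSum_mul_sub_one_add_one (pow_pos hx e) u, mul_add_one, ← mul_assoc]
    exact Nat.add_modEq_right_iff.mpr (hM.mul_right _)
  have hpert : ∀ t, j * x ^ (e * u * t) ≡ j [MOD M] := by
    intro t
    induction t with
    | zero => simp [Nat.ModEq]
    | succ t ih => rw [mul_add_one, pow_add, ← mul_assoc]; exact (ih.mul_right _).trans hper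
  wlog hle : a ≤ b generalizing a b
  · exact (this hab.symm (le_of_not_ge hle)).symm
  obtain ⟨t, rfl⟩ := (Nat.modEq_iff_exists_eq_add hle).mp hab
  rw [pow_add, ← mul_assoc, mul_right_comm]
  exact ((hpert t).mul_right _).symm

lemma add_pow_mul_mul_geomSum_modEq (h : ExponentModel x Q m l D) {e u j M k c i₀ i₁ : ℕ}
    (heu : e * u = m) (hmM : m ∣ M) (hj : j ≡ l * geomSum x e [MOD m])
    (hM : M ∣ j * geomSum (x ^ e) u) (hc : c ≡ l * geomSum x k [MOD m])
    (hshift : c + x ^ k * (j * geomSum (x ^ e) i₀) ≡ j * geomSum (x ^ e) i₁ [MOD M]) (t : ℕ) :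
    c + x ^ k * (j * geomSum (x ^ e) (i₀ + t)) ≡ j * geomSum (x ^ e) (i₁ + t) [MOD M] := by
  have hmul : ∀ i, j * geomSum (x ^ e) i ≡ l * geomSum x (e * i) [MOD m] := fun i => by
    simpa only [geomSum_mul, mul_assoc] using hj.mul_right (geomSum (x ^ e) i)
  have hsucc : ∀ i, j * geomSum (x ^ e) (i + 1) = j * geomSum (x ^ e) i + j * x ^ (e * i) :=
    fun i => by rw [geomSum_succ, pow_mul]; ring
  have hkey : k + e * i₀ ≡ e * i₁ [MOD m] := by
    refine h.geomSum_modEq_iff.mp ?_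
    rw [geomSum_add, mul_add, mul_left_comm]
    exact (hc.symm.add ((hmul i₀).symm.mul_left _)).trans ((hshift.of_dvd hmM).trans (hmul i₁))
  induction t with
  | zero => exact hshift
  | succ t ih =>
    have hstep : c + x ^ k * (j * geomSum (x ^ e) (i₀ + t + 1)) =
        c + x ^ k * (j * geomSum (x ^ e) (i₀ + t)) + j * x ^ (k + e * (i₀ + t)) := by
      rw [hsucc]; ring
    rw [← add_assoc, ← add_assoc, hstep, hsucc]
    refine ih.add (mul_pow_modEq_of_dvd h.x_pos hM ?_)
    rw [heu, mul_add, mul_add, ← add_assoc]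
    exact hkey.add_right _

lemma isExpBlock_of_mem_iff (h : ExponentModel x Q m l D) {e u j M : ℕ} (heu : e * u = m)
    (hmM : m ∣ M) (hj : j ≡ l * geomSum x e [MOD m]) (hM : M ∣ j * geomSum (x ^ e) u)
    (hA : ∀ n, n ∈ A ↔ ∃ i, n ≡ j * geomSum (x ^ e) i [MOD M]) : IsExpBlock x m l A := by
  intro k c hc
  by_cases hdis : ∀ n ∈ A, c + x ^ k * n ∉ A
  · exact Or.inr hdis
  left
  obtain ⟨n₂, hn₂, hn₂'⟩ : ∃ n ∈ A, c + x ^ k * n ∈ A := by simpa using hdis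
  obtain ⟨i₀, hi₀⟩ := (hA n₂).mp hn₂
  obtain ⟨i₁, hi₁⟩ := (hA _).mp hn₂'
  have hshift := h.add_pow_mul_mul_geomSum_modEq heu hmM hj hM hc
    (((hi₀.mul_left _).add_left c).symm.trans hi₁)
  intro n hn
  obtain ⟨i₂, hi₂⟩ := (hA n).mp hn
  have hu : 0 < u := Nat.pos_of_mul_pos_left (heu ▸ h.m_pos)
  -- choose `t` with `i₀ + t ≡ i₂ [MOD u]`
  have ht : i₀ + (i₂ + u * i₀ - i₀) = i₂ + u * i₀ := by
    have := Nat.le_mul_of_pos_left i₀ hu; omega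
  have hi₂t : j * geomSum (x ^ e) i₂ ≡ j * geomSum (x ^ e) (i₀ + (i₂ + u * i₀ - i₀)) [MOD M] := by
    have := geomSum_modEq_mod hM (i₂ + u * i₀)
    rw [Nat.add_mul_mod_self_left] at this
    rw [ht]
    exact (geomSum_modEq_mod hM i₂).trans this.symm
  exact (hA _).mpr ⟨_, ((hi₂.trans hi₂t).mul_left _ |>.add_left c).trans (hshift _)⟩

theorem isExpBlock_of_isExpCanonical (h : ExponentModel x Q m l D)
    (hA : IsExpCanonical x Q m l A) : IsExpBlock x m l A := by
  obtain ⟨e, he, hem, r, -, -, n₀, j, hj, hrdvd, hAeq⟩ := hA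
  have heu : e * (m / e) = m := Nat.mul_div_cancel' hem
  have hmX : m ∣ j * geomSum (x ^ e) (m / e) := by
    rw [hj, add_mul, mul_assoc l, ← geomSum_mul, heu]
    exact dvd_add (dvd_mul_of_dvd_left (dvd_mul_left m n₀) _) ((h.dvd_geomSum_iff m).mpr dvd_rfl)
  have hM : m * r ∣ j * geomSum (x ^ e) (m / e) := by
    obtain ⟨w, hw⟩ := hmX
    rw [hw, Nat.mul_div_cancel_left _ h.m_pos] at hrdvd
    rw [hw]
    exact Nat.mul_dvd_mul_left m hrdvd
  refine isExpBlock_of_mem_iff h heu (dvd_mul_right m r) ?_ hM fun n => ?_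
  · rw [hj]; exact Nat.mul_modulus_add_modEq_iff.mpr rfl
  · rw [hAeq]
    exact ⟨fun ⟨i, _, hi⟩ => ⟨i, hi⟩, fun ⟨i, hi⟩ => ⟨i % (m / e),
      Nat.mod_lt i (Nat.div_pos (Nat.le_of_dvd h.m_pos hem) he), hi.trans (geomSum_modEq_mod hM i)⟩⟩

theorem isExpBlock_iff (h : ExponentModel x Q m l D)
    (hA : ∀ a b, a ≡ b [MOD Q] → a ∈ A → b ∈ A) (h0 : 0 ∈ A) :
    IsExpBlock x m l A ↔ IsExpCanonical x Q m l A :=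
  ⟨h.isExpCanonical_of_isExpBlock hA h0, h.isExpBlock_of_isExpCanonical⟩

end ExponentModel

end ExponentModel

section Generator

variable {F : Type*} [Field F] [Fintype F] {ξ : F}

lemma orderOf_eq_card_sub_one (hξ0 : ξ ≠ 0) (hξgen : ∀ z : F, z ≠ 0 → ∃ k : ℕ, ξ ^ k = z) :
    orderOf ξ = Fintype.card F - 1 := by
  classical
  set u : Fˣ := Units.mk0 ξ hξ0
  have hu : ∀ v : Fˣ, v ∈ Subgroup.zpowers u := fun v => by
    obtain ⟨k, hk⟩ := hξgen v v.ne_zero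
    exact ⟨k, Units.ext (by simpa [u] using hk)⟩
  rw [← Fintype.card_units, ← Nat.card_eq_fintype_card, ← orderOf_eq_card_of_forall_mem_zpowers hu,
    ← orderOf_units]
  rfl

lemma pow_eq_pow_iff_modEq_card_sub_one (hξ0 : ξ ≠ 0)
    (hξgen : ∀ z : F, z ≠ 0 → ∃ k : ℕ, ξ ^ k = z) {a b : ℕ} :
    ξ ^ a = ξ ^ b ↔ a ≡ b [MOD Fintype.card F - 1] := by
  have hfin : IsOfFinOrder ξ := by
    rw [← orderOf_pos_iff, orderOf_eq_card_sub_one hξ0 hξgen]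
    have := Fintype.one_lt_card (α := F); omega
  rw [hfin.pow_eq_pow_iff_modEq, orderOf_eq_card_sub_one hξ0 hξgen]

lemma pow_mem_range_pow_mul_iff (hξ0 : ξ ≠ 0) (hξgen : ∀ z : F, z ≠ 0 → ∃ k : ℕ, ξ ^ k = z)
    {c n : ℕ} (hc : c ∣ Fintype.card F - 1) :
    ξ ^ n ∈ Set.range (fun t : ℕ => ξ ^ (c * t)) ↔ c ∣ n := by
  refine ⟨fun ⟨t, ht⟩ => ?_, fun ⟨t, ht⟩ => ⟨t, ht ▸ rfl⟩⟩
  exact (((pow_eq_pow_iff_modEq_card_sub_one hξ0 hξgen).mp ht).dvd_iff hc).mp (dvd_mul_right c t)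

lemma ncard_range_pow_mul (hξ0 : ξ ≠ 0) (hξgen : ∀ z : F, z ≠ 0 → ∃ k : ℕ, ξ ^ k = z)
    {c : ℕ} (hc0 : 0 < c) (hc : c ∣ Fintype.card F - 1) :
    (Set.range fun t : ℕ => ξ ^ (c * t)).ncard = (Fintype.card F - 1) / c := by
  set N := (Fintype.card F - 1) / c
  have hQ : Fintype.card F - 1 = c * N := (Nat.mul_div_cancel' hc).symm
  have hN : 0 < N := Nat.pos_of_mul_pos_left (a := c) (by
    have := Fintype.one_lt_card (α := F); omega)
  have hpow : ∀ a b, ξ ^ (c * a) = ξ ^ (c * b) ↔ a ≡ b [MOD N] := fun a b => by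
    rw [pow_eq_pow_iff_modEq_card_sub_one hξ0 hξgen, hQ, Nat.ModEq.mul_left_cancel_iff' hc0.ne']
  have himage : (Set.range fun t : ℕ => ξ ^ (c * t)) = (fun t => ξ ^ (c * t)) '' Set.Iio N := by
    ext z
    constructor
    · rintro ⟨t, rfl⟩
      exact ⟨t % N, Nat.mod_lt t hN, (hpow _ _).mpr (Nat.mod_modEq t N)⟩
    · rintro ⟨t, -, rfl⟩
      exact ⟨t, rfl⟩
  have hinj : Set.InjOn (fun t => ξ ^ (c * t)) (Set.Iio N) := fun a ha b hb hab =>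
    ((hpow a b).mp hab).eq_of_lt_of_lt ha hb
  rw [himage, hinj.ncard_image, Set.ncard_Iio_nat]

lemma exists_mem_range_pow_mul_eq_iff (hξ0 : ξ ≠ 0) (hξgen : ∀ z : F, z ≠ 0 → ∃ k : ℕ, ξ ^ k = z)
    {c n a : ℕ} (hc : c ∣ Fintype.card F - 1) :
    (∃ k ∈ Set.range fun t : ℕ => ξ ^ (c * t), ξ ^ n = ξ ^ a * k) ↔ n ≡ a [MOD c] := by
  have hQ : 0 < Fintype.card F - 1 := by have := Fintype.one_lt_card (α := F); omega
  constructor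
  · rintro ⟨_, ⟨t, rfl⟩, ht⟩
    rw [← pow_add, pow_eq_pow_iff_modEq_card_sub_one hξ0 hξgen] at ht
    exact (ht.of_dvd hc).trans (Nat.add_modulus_mul_modEq_iff.mpr rfl)
  · intro h
    obtain ⟨t, ht⟩ := (Nat.modEq_iff_exists_eq_add (le_add_left (Nat.le_mul_of_pos_left a hQ))).mp
      (((Nat.add_modulus_mul_modEq_iff.mpr rfl).of_dvd hc).trans h).symm
    refine ⟨_, ⟨t, rfl⟩, ?_⟩
    rw [← pow_add, ← ht, pow_eq_pow_iff_modEq_card_sub_one hξ0 hξgen]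
    exact (Nat.add_modulus_mul_modEq_iff.mpr rfl).symm

lemma inv_mem_range_pow_mul (hξ0 : ξ ≠ 0) (c t : ℕ) :
    (ξ ^ (c * t))⁻¹ ∈ Set.range fun t : ℕ => ξ ^ (c * t) := by
  refine ⟨t * (Fintype.card F - 1 - 1), (inv_eq_of_mul_eq_one_right ?_).symm⟩
  have hexp : c * t + c * (t * (Fintype.card F - 1 - 1)) = (Fintype.card F - 1) * (c * t) := by
    obtain ⟨Q, hQ⟩ : ∃ Q, Fintype.card F - 1 = Q + 1 :=
      ⟨_, (Nat.sub_one_add_one (by have := Fintype.one_lt_card (α := F); omega)).symm⟩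
    rw [hQ, Nat.add_sub_cancel]; ring
  rw [← pow_add, hexp, pow_mul, FiniteField.pow_card_sub_one_eq_one ξ hξ0, one_pow]

lemma exists_eq_range_pow_mul (hξ0 : ξ ≠ 0) (hξgen : ∀ z : F, z ≠ 0 → ∃ k : ℕ, ξ ^ k = z)
    {K : Set F} (hK0 : ∀ z ∈ K, z ≠ 0) (hK1 : 1 ∈ K) (hKmul : ∀ a ∈ K, ∀ b ∈ K, a * b ∈ K) :
    ∃ c, 0 < c ∧ c ∣ Fintype.card F - 1 ∧ K = Set.range fun t : ℕ => ξ ^ (c * t) := by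
  have hQ : 0 < Fintype.card F - 1 := by have := Fintype.one_lt_card (α := F); omega
  obtain ⟨c, hc0, hc, hK⟩ := exists_mem_iff_dvd (T := {n | ξ ^ n ∈ K}) hQ
    (fun a b hab ha => by
      simpa [(pow_eq_pow_iff_modEq_card_sub_one hξ0 hξgen).mpr hab] using ha)
    (by simpa using hK1) (fun a ha b hb => by simpa [pow_add] using hKmul _ ha _ hb)
  refine ⟨c, hc0, hc, Set.ext fun z => ?_⟩
  constructor
  · intro hz
    obtain ⟨n, rfl⟩ := hξgen z (hK0 z hz)
    exact (pow_mem_range_pow_mul_iff hξ0 hξgen hc).mpr ((hK n).mp hz)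
  · rintro ⟨t, rfl⟩
    exact (hK _).mpr (dvd_mul_right c t)

end Generator

lemma pow_pow_eq_of_modEq {F : Type*} [Field F] [Fintype F] {p d k k' : ℕ}
    (hcard : Fintype.card F = p ^ d) (h : k ≡ k' [MOD d]) (z : F) : z ^ p ^ k = z ^ p ^ k' := by
  wlog hle : k ≤ k' generalizing k k'
  · exact (this h.symm (le_of_not_ge hle)).symm
  obtain ⟨t, rfl⟩ := (Nat.modEq_iff_exists_eq_add hle).mp h
  rw [pow_add, pow_mul p, ← hcard, pow_mul, FiniteField.pow_card_pow]

lemma pow_modEq_one_card_sub_one {F : Type*} [Fintype F] [Nonempty F] {p d : ℕ}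
    (hcard : Fintype.card F = p ^ d) : p ^ d ≡ 1 [MOD Fintype.card F - 1] :=
  hcard ▸ Nat.modEq_sub Fintype.card_pos

end AGammaL1

namespace scalarFrob

open AGammaL1

variable {F : Type*} [Field F] {G : Subgroup (Equiv.Perm F)} {p : ℕ} {a b : F} {k k' : ℕ}

lemma one_zero : scalarFrob G p 1 0 := ⟨1, G.one_mem, fun z => by simp⟩

lemma ne_zero (ha : scalarFrob G p a k) : a ≠ 0 := by
  rintro rfl
  obtain ⟨g, -, hgz⟩ := ha
  exact one_ne_zero (g.injective (by simp [hgz]))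

lemma mul (ha : scalarFrob G p a k) (hb : scalarFrob G p b k') :
    scalarFrob G p (a * b ^ p ^ k) (k + k') := by
  obtain ⟨g, hg, hgz⟩ := ha
  obtain ⟨g', hg', hg'z⟩ := hb
  refine ⟨g * g', G.mul_mem hg hg', fun z => ?_⟩
  rw [Equiv.Perm.mul_apply, hg'z, hgz, mul_pow, ← pow_mul, ← pow_add, add_comm k', mul_assoc]

lemma mul_of_zero (ha : scalarFrob G p a 0) (hb : scalarFrob G p b k) :
    scalarFrob G p (a * b) k := by
  simpa using ha.mul hb

lemma pow (ha : scalarFrob G p a 0) (n : ℕ) : scalarFrob G p (a ^ n) 0 := by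
  induction n with
  | zero => simpa using one_zero
  | succ n ih => rw [pow_succ]; exact ih.mul_of_zero ha

variable [Fintype F] {d : ℕ}

lemma of_modEq (hcard : Fintype.card F = p ^ d) (hkk : k ≡ k' [MOD d])
    (ha : scalarFrob G p a k) : scalarFrob G p a k' := by
  obtain ⟨g, hg, hgz⟩ := ha
  exact ⟨g, hg, fun z => by rw [hgz, pow_pow_eq_of_modEq hcard hkk]⟩

lemma inv (hcard : Fintype.card F = p ^ d) (hk : d ∣ k' + k) (ha : scalarFrob G p a k) :
    scalarFrob G p (a⁻¹ ^ p ^ k') k' := by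
  have ha0 := ha.ne_zero
  obtain ⟨g, hg, hgz⟩ := ha
  refine ⟨g⁻¹, G.inv_mem hg, fun z => g.injective ?_⟩
  rw [← Equiv.Perm.mul_apply, mul_inv_cancel, Equiv.Perm.one_apply, hgz, ← mul_pow, ← pow_mul,
    ← pow_add, pow_pow_eq_of_modEq hcard (Nat.modEq_zero_iff_dvd.mpr hk), pow_zero, pow_one,
    mul_inv_cancel_left₀ ha0]

end scalarFrob

namespace AGammaL1

section Structure

variable {F : Type*} [Field F] [Fintype F] {G : Subgroup (Equiv.Perm F)} {p d s m l : ℕ} {ξ : F}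

lemma dvd_of_isLeast (hd : 0 < d) (hcard : Fintype.card F = p ^ d)
    (hs : IsLeast {k | 0 < k ∧ ∃ a : F, a ≠ 0 ∧ scalarFrob G p a k} s) :
    s ∣ d ∧ ∀ {a : F} {k : ℕ}, scalarFrob G p a k → s ∣ k := by
  obtain ⟨c, hc0, hcd, hc⟩ := exists_mem_iff_dvd (T := {k | ∃ a : F, scalarFrob G p a k}) hd
    (fun k k' hkk' ⟨a, ha⟩ => ⟨a, ha.of_modEq hcard hkk'⟩) ⟨1, scalarFrob.one_zero⟩
    (fun k ⟨a, ha⟩ k' ⟨b, hb⟩ => ⟨_, ha.mul hb⟩)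
  obtain ⟨a, ha⟩ := (hc c).mpr dvd_rfl
  obtain ⟨a', -, ha'⟩ := hs.1.2
  obtain rfl : c = s := le_antisymm (Nat.le_of_dvd hs.1.1 ((hc s).mp ⟨a', ha'⟩))
    (hs.2 ⟨hc0, a, ha.ne_zero, ha⟩)
  exact ⟨hcd, fun ha => (hc _).mp ⟨_, ha⟩⟩

lemma scalarFrob_one_iff_of_isLeast (hd : 0 < d) (hcard : Fintype.card F = p ^ d) (hsd : s ∣ d)
    (hm : IsLeast {k | 0 < k ∧ scalarFrob G p 1 (k * s)} m) :
    m ∣ d / s ∧ ∀ k, scalarFrob G p 1 (k * s) ↔ m ∣ k := by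
  have hD : 0 < d / s := Nat.div_pos (Nat.le_of_dvd hd hsd) (Nat.pos_of_dvd_of_pos hsd hd)
  obtain ⟨c, hc0, hcD, hc⟩ := exists_mem_iff_dvd (T := {k | scalarFrob G p 1 (k * s)}) hD
    (fun k k' hkk' hk => hk.of_modEq hcard (by
      simpa [Nat.div_mul_cancel hsd] using hkk'.mul_right' s))
    (by simpa using scalarFrob.one_zero (G := G) (p := p))
    (fun k hk k' hk' => by simpa [add_mul] using hk.mul hk')
  obtain rfl : c = m := le_antisymm (Nat.le_of_dvd hm.1.1 ((hc m).mp hm.1.2))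
    (hm.2 ⟨hc0, (hc c).mpr dvd_rfl⟩)
  exact ⟨hcD, hc⟩

lemma scalarFrob_mul_iff (hd : 0 < d) (hcard : Fintype.card F = p ^ d)
    (hH1 : {a : F | scalarFrob G p a s} =
      (fun h : F => h * ξ ^ l) '' {a : F | scalarFrob G p a 0}) (k : ℕ) (a : F) :
    scalarFrob G p a (k * s) ↔ ∃ h, scalarFrob G p h 0 ∧ a = h * ξ ^ (l * geomSum (p ^ s) k) := by
  have hb : scalarFrob G p (ξ ^ l) s := by
    have : ξ ^ l ∈ {a : F | scalarFrob G p a s} := hH1 ▸ ⟨1, scalarFrob.one_zero, one_mul _⟩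
    exact this
  have hds : d ∣ (d - 1) * s + s := ⟨s, by rw [← add_one_mul, Nat.sub_one_add_one hd.ne']⟩
  have hroot : ∀ z : F, (z ^ p ^ ((d - 1) * s)) ^ p ^ s = z := fun z => by
    rw [← pow_mul, ← pow_add, pow_pow_eq_of_modEq hcard hds.modEq_zero_nat, pow_zero, pow_one]
  induction k generalizing a with
  | zero => simp
  | succ k ih =>
    have hexp : ∀ h : F, ξ ^ l * (h * ξ ^ (l * geomSum (p ^ s) k)) ^ p ^ s =
        h ^ p ^ s * ξ ^ (l * geomSum (p ^ s) (k + 1)) := fun h => by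
      rw [geomSum_succ', mul_pow, ← pow_mul, mul_add, mul_one, pow_add]; ring
    constructor
    · intro ha
      -- undo `t(ξ ^ l, s)`, whose inverse has Frobenius part `(d - 1) * s`
      have hmod : (d - 1) * s + (k + 1) * s ≡ k * s [MOD d] := by
        have := hds.modEq_zero_nat.add_right (k * s)
        rwa [zero_add, add_assoc, add_comm s, ← add_one_mul] at this
      obtain ⟨h, hh, hc⟩ := (ih _).mp (((hb.inv hcard hds).mul ha).of_modEq hcard hmod)
      refine ⟨h ^ p ^ s, hh.pow _, ?_⟩
      rw [← hexp, ← hc, ← mul_pow, hroot, mul_inv_cancel_left₀ hb.ne_zero]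
    · rintro ⟨h, hh, rfl⟩
      have := hb.mul ((ih _).mpr ⟨_, hh.pow (p ^ ((d - 1) * s)), rfl⟩)
      rw [hexp, hroot] at this
      convert this using 2
      ring

lemma dvd_mul_geomSum_iff (hd : 0 < d) (hcard : Fintype.card F = p ^ d)
    (hH1 : {a : F | scalarFrob G p a s} =
      (fun h : F => h * ξ ^ l) '' {a : F | scalarFrob G p a 0})
    (hM : ∀ k, scalarFrob G p 1 (k * s) ↔ m ∣ k) {c : ℕ}
    (hH : ∀ n, scalarFrob G p (ξ ^ n) 0 ↔ c ∣ n) (u : ℕ) :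
    c ∣ l * geomSum (p ^ s) u ↔ m ∣ u := by
  rw [← hH, ← hM, scalarFrob_mul_iff hd hcard hH1]
  constructor
  · intro hu
    exact ⟨_, by simpa using hu.inv hcard (dvd_zero d), (inv_mul_cancel₀ hu.ne_zero).symm⟩
  · rintro ⟨h, hh, h1⟩
    rw [eq_inv_of_mul_eq_one_right h1.symm]
    simpa using hh.inv hcard (dvd_zero d)

end Structure

structure Setting {F : Type*} [Field F] [Fintype F] (G : Subgroup (Equiv.Perm F))
    (p d s m l : ℕ) (ξ : F) : Prop where
  p_ne_zero : p ≠ 0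
  d_pos : 0 < d
  card_eq : Fintype.card F = p ^ d
  semilinear : ∀ g ∈ G, ∃ (a c : F) (k : ℕ), ∀ z : F, g z = a * z ^ p ^ k + c
  two_transitive : ∀ x y x' y' : F, x ≠ y → x' ≠ y' → ∃ g ∈ G, g x = x' ∧ g y = y'
  isLeast_s : IsLeast {k | 0 < k ∧ ∃ a : F, a ≠ 0 ∧ scalarFrob G p a k} s
  isLeast_m : IsLeast {k | 0 < k ∧ scalarFrob G p 1 (k * s)} m
  ξ_ne_zero : ξ ≠ 0
  generates : ∀ z : F, z ≠ 0 → ∃ k : ℕ, ξ ^ k = z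
  coset : {a : F | scalarFrob G p a s} = (fun h : F => h * ξ ^ l) '' {a : F | scalarFrob G p a 0}

namespace Setting

variable {F : Type*} [Field F] [Fintype F] {G : Subgroup (Equiv.Perm F)} {p d s m l : ℕ} {ξ : F}

lemma exists_eq_of_map_zero (h : Setting G p d s m l ξ) {g : Equiv.Perm F} (hg : g ∈ G)
    (hg0 : g 0 = 0) :
    ∃ k a, scalarFrob G p a 0 ∧ ∀ z, g z = a * ξ ^ (l * geomSum (p ^ s) k) * z ^ (p ^ s) ^ k := by
  obtain ⟨a, c, k, hgz⟩ := h.semilinear g hg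
  obtain rfl : c = 0 := by simpa [hgz, zero_pow (pow_ne_zero k h.p_ne_zero)] using hg0
  have ha : scalarFrob G p a k := ⟨g, hg, fun z => by simpa using hgz z⟩
  obtain ⟨k₁, rfl⟩ := (dvd_of_isLeast h.d_pos h.card_eq h.isLeast_s).2 ha
  obtain ⟨b, hb, rfl⟩ :=
    (scalarFrob_mul_iff h.d_pos h.card_eq h.coset k₁ a).mp (by rwa [mul_comm] at ha)
  exact ⟨k₁, b, hb, fun z => by rw [hgz, add_zero, pow_mul p s k₁]⟩

lemma scalarFrob_one_iff (h : Setting G p d s m l ξ) (k : ℕ) :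
    scalarFrob G p 1 (k * s) ↔ m ∣ k :=
  (scalarFrob_one_iff_of_isLeast h.d_pos h.card_eq
    (dvd_of_isLeast h.d_pos h.card_eq h.isLeast_s).1 h.isLeast_m).2 k

/-- `G₀ ∩ {t(a, 0)} = ⟨ξ ^ m⟩`. Writing it as `⟨ξ ^ c⟩`, transitivity of `G₀` on `F^×` makes
`k ↦ l * [p ^ s, k]` onto `ℤ / c`, and minimality of `m` makes it injective on `ℤ / m`. -/
lemma scalarFrob_pow_zero_iff (h : Setting G p d s m l ξ) (n : ℕ) :
    scalarFrob G p (ξ ^ n) 0 ↔ m ∣ n := by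
  obtain ⟨c, hc0, hcQ, hH⟩ := exists_eq_range_pow_mul h.ξ_ne_zero h.generates
    (K := {a | scalarFrob G p a 0}) (fun _ ha => scalarFrob.ne_zero ha) scalarFrob.one_zero
    (fun _ ha _ hb => ha.mul_of_zero hb)
  have hHc : ∀ n, scalarFrob G p (ξ ^ n) 0 ↔ c ∣ n := fun n => by
    rw [← pow_mem_range_pow_mul_iff h.ξ_ne_zero h.generates hcQ, ← hH]; rfl
  have hgeom := dvd_mul_geomSum_iff h.d_pos h.card_eq h.coset h.scalarFrob_one_iff hHc
  have hcop : Nat.Coprime (p ^ s) c :=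
    ((coprime_of_pow_modEq_one h.d_pos (pow_modEq_one_card_sub_one h.card_eq)).pow_left
      s).coprime_dvd_right hcQ
  suffices m = c by rw [this]; exact hHc n
  refine eq_of_bijective_mod hc0 (f := fun k => l * geomSum (p ^ s) k)
    (fun k hk k' hk' hkk' => ((geomSum_modEq_iff hcop hgeom).mp hkk').eq_of_lt_of_lt hk hk')
    (fun n => ?_)
  obtain ⟨g, hg, hg0, hg1⟩ :=
    h.two_transitive 0 1 0 (ξ ^ n) zero_ne_one (pow_ne_zero n h.ξ_ne_zero).symm
  obtain ⟨k, a, ha, hgz⟩ := h.exists_eq_of_map_zero hg hg0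
  obtain ⟨t, rfl⟩ : a ∈ Set.range fun t : ℕ => ξ ^ (c * t) := hH ▸ ha
  have hn : c * t + l * geomSum (p ^ s) k ≡ n [MOD Fintype.card F - 1] :=
    (pow_eq_pow_iff_modEq_card_sub_one h.ξ_ne_zero h.generates).mp
      (by rw [pow_add, ← hg1, hgz, one_pow, mul_one])
  exact ⟨k % m, Nat.mod_lt k h.isLeast_m.1.1,
    (geomSum_modEq_mod ((hgeom m).mpr dvd_rfl) k).symm.trans
      (Nat.modulus_mul_add_modEq_iff.mp (hn.of_dvd hcQ))⟩

lemma dvd_card_sub_one (h : Setting G p d s m l ξ) : m ∣ Fintype.card F - 1 :=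
  (h.scalarFrob_pow_zero_iff _).mp
    (by rw [FiniteField.pow_card_sub_one_eq_one ξ h.ξ_ne_zero]; exact scalarFrob.one_zero)

lemma exists_pow_eq_of_map_zero (h : Setting G p d s m l ξ) {g : Equiv.Perm F} (hg : g ∈ G)
    (hg0 : g 0 = 0) :
    ∃ k c, c ≡ l * geomSum (p ^ s) k [MOD m] ∧ ∀ z, g z = ξ ^ c * z ^ (p ^ s) ^ k := by
  obtain ⟨k, a, ha, hgz⟩ := h.exists_eq_of_map_zero hg hg0
  obtain ⟨n, rfl⟩ := h.generates a ha.ne_zero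
  exact ⟨k, n + l * geomSum (p ^ s) k,
    Nat.add_modEq_right_iff.mpr ((h.scalarFrob_pow_zero_iff n).mp ha),
    fun z => by rw [hgz, pow_add]⟩

lemma exists_of_modEq (h : Setting G p d s m l ξ) {k c : ℕ}
    (hc : c ≡ l * geomSum (p ^ s) k [MOD m]) : ∃ g ∈ G, ∀ z, g z = ξ ^ c * z ^ (p ^ s) ^ k := by
  obtain ⟨_, ⟨t, rfl⟩, hξc⟩ :=
    (exists_mem_range_pow_mul_eq_iff h.ξ_ne_zero h.generates h.dvd_card_sub_one).mpr hc
  obtain ⟨g, hg, hgz⟩ := (scalarFrob_mul_iff h.d_pos h.card_eq h.coset k _).mpr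
    ⟨_, (h.scalarFrob_pow_zero_iff _).mpr (dvd_mul_right m t), hξc.trans (mul_comm _ _)⟩
  exact ⟨g, hg, fun z => by rw [hgz, mul_comm k, pow_mul]⟩

lemma exponentModel (h : Setting G p d s m l ξ) :
    ExponentModel (p ^ s) (Fintype.card F - 1) m l (d / s) := by
  have hsd := (dvd_of_isLeast h.d_pos h.card_eq h.isLeast_s).1
  refine
    { Q_pos := by have := Fintype.one_lt_card (α := F); omega
      m_pos := h.isLeast_m.1.1
      D_pos := Nat.div_pos (Nat.le_of_dvd h.d_pos hsd) (Nat.pos_of_dvd_of_pos hsd h.d_pos)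
      x_pos := pow_pos (Nat.pos_of_ne_zero h.p_ne_zero) s
      m_dvd_Q := h.dvd_card_sub_one
      m_dvd_D := (scalarFrob_one_iff_of_isLeast h.d_pos h.card_eq hsd h.isLeast_m).1
      pow_modEq_one := by
        rw [← pow_mul, Nat.mul_div_cancel' hsd]; exact pow_modEq_one_card_sub_one h.card_eq
      dvd_geomSum_iff := dvd_mul_geomSum_iff h.d_pos h.card_eq h.coset h.scalarFrob_one_iff
        h.scalarFrob_pow_zero_iff
      exists_modEq := fun n => ?_ }
  obtain ⟨g, hg, hg0, hg1⟩ :=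
    h.two_transitive 0 1 0 (ξ ^ n) zero_ne_one (pow_ne_zero n h.ξ_ne_zero).symm
  obtain ⟨k, c, hc, hgz⟩ := h.exists_pow_eq_of_map_zero hg hg0
  exact ⟨k, c, hc, (pow_eq_pow_iff_modEq_card_sub_one h.ξ_ne_zero h.generates).mp
    (by rw [← hg1, hgz, one_pow, mul_one])⟩

lemma setOf_scalarFrob_zero_eq (h : Setting G p d s m l ξ) :
    {a : F | scalarFrob G p a 0} = Set.range fun t : ℕ => ξ ^ (m * t) := by
  ext a
  constructor
  · intro ha
    obtain ⟨n, rfl⟩ := h.generates a ha.ne_zero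
    exact (pow_mem_range_pow_mul_iff h.ξ_ne_zero h.generates h.dvd_card_sub_one).mpr
      ((h.scalarFrob_pow_zero_iff n).mp ha)
  · rintro ⟨t, rfl⟩
    exact (h.scalarFrob_pow_zero_iff _).mpr (dvd_mul_right m t)

end Setting

section Translation

variable {F : Type*} [Field F] [Fintype F] {ξ : F}

lemma image_eq_or_inter_eq_empty_iff (hξgen : ∀ z : F, z ≠ 0 → ∃ k : ℕ, ξ ^ k = z) {P : Set F}
    (hP0 : ∀ z ∈ P, z ≠ 0) {g : Equiv.Perm F} {x k c : ℕ} (hg : ∀ z, g z = ξ ^ c * z ^ x ^ k) :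
    (⇑g '' P = P ∨ ⇑g '' P ∩ P = ∅) ↔
      (∀ n, ξ ^ n ∈ P → ξ ^ (c + x ^ k * n) ∈ P) ∨ ∀ n, ξ ^ n ∈ P → ξ ^ (c + x ^ k * n) ∉ P := by
  have hgξ : ∀ n : ℕ, g (ξ ^ n) = ξ ^ (c + x ^ k * n) := fun n => by
    rw [hg, ← pow_mul, ← pow_add, mul_comm n]
  constructor
  · rintro (heq | hdis)
    · exact Or.inl fun n hn => heq ▸ ⟨_, hn, hgξ n⟩
    · exact Or.inr fun n hn hmem =>
        Set.eq_empty_iff_forall_notMem.mp hdis _ ⟨⟨_, hn, hgξ n⟩, hmem⟩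
  · rintro (hmaps | hdis)
    · refine Or.inl (Set.eq_of_subset_of_ncard_le ?_ (Set.ncard_image_of_injective P g.injective).ge
        (Set.toFinite P))
      rintro _ ⟨v, hv, rfl⟩
      obtain ⟨n, rfl⟩ := hξgen v (hP0 v hv)
      exact hgξ n ▸ hmaps n hv
    · refine Or.inr (Set.eq_empty_iff_forall_notMem.mpr ?_)
      rintro _ ⟨⟨v, hv, rfl⟩, hgv⟩
      obtain ⟨n, rfl⟩ := hξgen v (hP0 v hv)
      exact hdis n hv (hgξ n ▸ hgv)

lemma isBlock_iff_isExpBlock {G : Subgroup (Equiv.Perm F)} {x m l : ℕ} (hx : x ≠ 0)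
    (hξgen : ∀ z : F, z ≠ 0 → ∃ k : ℕ, ξ ^ k = z) {P : Set F} (hP0 : ∀ z ∈ P, z ≠ 0)
    (hG0 : ∀ g ∈ G, g 0 = 0 →
      ∃ k c, c ≡ l * geomSum x k [MOD m] ∧ ∀ z, g z = ξ ^ c * z ^ x ^ k)
    (hG0' : ∀ k c, c ≡ l * geomSum x k [MOD m] → ∃ g ∈ G, ∀ z, g z = ξ ^ c * z ^ x ^ k) :
    (∀ g ∈ G, g 0 = 0 → (⇑g '' P = P ∨ ⇑g '' P ∩ P = ∅)) ↔
      IsExpBlock x m l {n | ξ ^ n ∈ P} := by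
  constructor
  · intro hL k c hc
    obtain ⟨g, hg, hgz⟩ := hG0' k c hc
    exact (image_eq_or_inter_eq_empty_iff hξgen hP0 hgz).mp
      (hL g hg (by rw [hgz, zero_pow (pow_ne_zero k hx), mul_zero]))
  · intro hL g hg hg0
    obtain ⟨k, c, hc, hgz⟩ := hG0 g hg hg0
    exact (image_eq_or_inter_eq_empty_iff hξgen hP0 hgz).mpr (hL k c hc)

lemma isExpBlock_of_mul_mem (hξ0 : ξ ≠ 0) (hξgen : ∀ z : F, z ≠ 0 → ∃ k : ℕ, ξ ^ k = z)
    {P : Set F} (hP0 : ∀ z ∈ P, z ≠ 0) (hP1 : 1 ∈ P) (hPmul : ∀ x ∈ P, ∀ y ∈ P, x * y ∈ P)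
    (x m l : ℕ) : IsExpBlock x m l {n | ξ ^ n ∈ P} := by
  obtain ⟨c₀, -, hc₀Q, rfl⟩ := exists_eq_range_pow_mul hξ0 hξgen hP0 hP1 hPmul
  intro k c _
  simp only [Set.mem_ofPred_eq, pow_mem_range_pow_mul_iff hξ0 hξgen hc₀Q]
  by_cases hc : c₀ ∣ c
  · exact Or.inl fun n hn => dvd_add hc (dvd_mul_of_dvd_right hn _)
  · exact Or.inr fun n hn hcn => hc ((Nat.dvd_add_left (dvd_mul_of_dvd_right hn _)).mp hcn)

lemma pow_mem_setOf_iff (hξ0 : ξ ≠ 0) (hξgen : ∀ z : F, z ≠ 0 → ∃ k : ℕ, ξ ^ k = z) {c u : ℕ}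
    (hc : c ∣ Fintype.card F - 1) (f : ℕ → ℕ) (n : ℕ) :
    ξ ^ n ∈ {v : F | ∃ i < u, ∃ k ∈ Set.range (fun t : ℕ => ξ ^ (c * t)), v = ξ ^ f i * k} ↔
      ∃ i < u, n ≡ f i [MOD c] := by
  rw [Set.mem_ofPred_eq]
  exact exists_congr fun _ => and_congr_right fun _ => exists_mem_range_pow_mul_eq_iff hξ0 hξgen hc

lemma eq_setOf_iff (hξ0 : ξ ≠ 0) (hξgen : ∀ z : F, z ≠ 0 → ∃ k : ℕ, ξ ^ k = z) {P : Set F}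
    (hP0 : ∀ z ∈ P, z ≠ 0) {c u : ℕ} (hc : c ∣ Fintype.card F - 1) (f : ℕ → ℕ) :
    P = {v : F | ∃ i < u, ∃ k ∈ Set.range (fun t : ℕ => ξ ^ (c * t)), v = ξ ^ f i * k} ↔
      ∀ n, ξ ^ n ∈ P ↔ ∃ i < u, n ≡ f i [MOD c] := by
  refine ⟨fun hP n => hP ▸ pow_mem_setOf_iff hξ0 hξgen hc f n, fun hP => Set.ext fun v => ?_⟩
  by_cases hv : v = 0
  · subst hv
    refine iff_of_false (fun h => hP0 0 h rfl) ?_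
    rintro ⟨i, -, _, ⟨t, rfl⟩, h⟩
    exact mul_ne_zero (pow_ne_zero _ hξ0) (pow_ne_zero _ hξ0) h.symm
  · obtain ⟨n, rfl⟩ := hξgen v hv
    rw [hP n, pow_mem_setOf_iff hξ0 hξgen hc f n]

lemma ncard_range_pow_mul_div (hξ0 : ξ ≠ 0) (hξgen : ∀ z : F, z ≠ 0 → ∃ k : ℕ, ξ ^ k = z)
    {m r : ℕ} (hm : 0 < m) (hr : 0 < r) (hmr : m * r ∣ Fintype.card F - 1) :
    (Set.range fun t : ℕ => ξ ^ (m * t)).ncard /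
      (Set.range fun t : ℕ => ξ ^ (m * r * t)).ncard = r := by
  rw [ncard_range_pow_mul hξ0 hξgen hm (dvd_of_mul_right_dvd hmr),
    ncard_range_pow_mul hξ0 hξgen (Nat.mul_pos hm hr) hmr]
  obtain ⟨N, hN⟩ := hmr
  have hN0 : 0 < N := Nat.pos_of_mul_pos_left (a := m * r) (by
    have := Fintype.one_lt_card (α := F); omega)
  rw [hN, mul_assoc, Nat.mul_div_cancel_left _ hm, ← mul_assoc,
    Nat.mul_div_cancel_left _ (Nat.mul_pos hm hr), Nat.mul_div_cancel _ hN0]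

lemma exists_subgroup_iff_isExpCanonical (hξ0 : ξ ≠ 0)
    (hξgen : ∀ z : F, z ≠ 0 → ∃ k : ℕ, ξ ^ k = z) {p s m l : ℕ} (hps : 2 ≤ p ^ s) (hm : 0 < m)
    (hmQ : m ∣ Fintype.card F - 1) {H P : Set F} (hH : H = Set.range fun t : ℕ => ξ ^ (m * t))
    (hP0 : ∀ z ∈ P, z ≠ 0) :
    (∃ (n e : ℕ), 0 < e ∧ e ∣ m ∧
      ∃ K : Set F, K ⊆ H ∧ (1 : F) ∈ K ∧ (∀ x ∈ K, ∀ y ∈ K, x * y ∈ K) ∧ (∀ x ∈ K, x⁻¹ ∈ K) ∧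
        ∃ j : ℕ, j = n * m + l * ((p ^ (s * e) - 1) / (p ^ s - 1)) ∧
          (Set.ncard H / Set.ncard K ∣ j * ((p ^ (e * s * (m / e)) - 1) / (p ^ (e * s) - 1)) / m) ∧
          P = {v : F | ∃ i < m / e, ∃ k ∈ K,
            v = (ξ ^ j) ^ ((p ^ (e * s * i) - 1) / (p ^ (e * s) - 1)) * k}) ↔
      IsExpCanonical (p ^ s) (Fintype.card F - 1) m l {n | ξ ^ n ∈ P} := by
  have hdiv : ∀ e i, 0 < e → (p ^ (e * s * i) - 1) / (p ^ (e * s) - 1) = geomSum ((p ^ s) ^ e) i :=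
    fun e i he => by
      rw [geomSum_eq_div (hps.trans (Nat.le_self_pow he.ne' _)), mul_comm e s, pow_mul p (s * e) i,
        pow_mul p s e]
  have hdiv1 : ∀ e, (p ^ (s * e) - 1) / (p ^ s - 1) = geomSum (p ^ s) e := fun e => by
    rw [geomSum_eq_div hps, pow_mul]
  constructor
  · rintro ⟨n₀, e, he, hem, K, hKH, hK1, hKmul, -, j, hj, hdvd, hPK⟩
    have hK0 : ∀ z ∈ K, z ≠ 0 := fun z hz => by
      obtain ⟨t, rfl⟩ := hH ▸ hKH hz
      exact pow_ne_zero _ hξ0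
    obtain ⟨c, hc0, hcQ, rfl⟩ := exists_eq_range_pow_mul hξ0 hξgen hK0 hK1 hKmul
    obtain ⟨r, rfl⟩ : m ∣ c :=
      (pow_mem_range_pow_mul_iff hξ0 hξgen hmQ).mp (hH ▸ hKH ⟨1, by simp⟩)
    have hr : 0 < r := Nat.pos_of_mul_pos_left hc0
    rw [hH, ncard_range_pow_mul_div hξ0 hξgen hm hr hcQ, hdiv e _ he] at hdvd
    simp_rw [hdiv e _ he, ← pow_mul ξ] at hPK
    exact ⟨e, he, hem, r, hr, hcQ, n₀, j, by rw [hj, hdiv1],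
      hdvd, (eq_setOf_iff hξ0 hξgen hP0 hcQ _).mp hPK⟩
  · rintro ⟨e, he, hem, r, hr, hmrQ, n₀, j, hj, hdvd, hA⟩
    refine ⟨n₀, e, he, hem, Set.range fun t : ℕ => ξ ^ (m * r * t), ?_, ⟨0, by simp⟩, ?_,
      ?_, j, by rw [hj, hdiv1], ?_, ?_⟩
    · rintro _ ⟨t, rfl⟩
      exact hH ▸ ⟨r * t, by simp only [mul_assoc]⟩
    · rintro _ ⟨t, rfl⟩ _ ⟨t', rfl⟩
      exact ⟨t + t', by simp only [mul_add, pow_add]⟩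
    · rintro _ ⟨t, rfl⟩
      exact inv_mem_range_pow_mul hξ0 _ t
    · rwa [hH, ncard_range_pow_mul_div hξ0 hξgen hm hr hmrQ, hdiv e _ he]
    · simp_rw [hdiv e _ he, ← pow_mul ξ]
      exact (eq_setOf_iff hξ0 hξgen hP0 hmrQ _).mpr hA

end Translation

end AGammaL1

open AGammaL1 in
theorem stmt_13_general {F : Type*} [Field F] [Fintype F] (p d : ℕ) (hp : p.Prime) (hd : 0 < d)
    (hcard : Fintype.card F = p ^ d)
    (G : Subgroup (Equiv.Perm F))
    (hAGL : ∀ g ∈ G, ∃ (a c : F) (k : ℕ), ∀ z : F, g z = a * z ^ p ^ k + c)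
    (h2trans : ∀ x y x' y' : F, x ≠ y → x' ≠ y' → ∃ g ∈ G, g x = x' ∧ g y = y')
    (s : ℕ) (hs : IsLeast {k | 0 < k ∧ ∃ a : F, a ≠ 0 ∧ scalarFrob G p a k} s)
    (m : ℕ) (hm : IsLeast {k | 0 < k ∧ scalarFrob G p 1 (k * s)} m)
    (ξ : F) (hξ0 : ξ ≠ 0) (hξgen : ∀ z : F, z ≠ 0 → ∃ k : ℕ, ξ ^ k = z)
    (l : ℕ)
    (hH1 : {a : F | scalarFrob G p a s} =
      (fun h : F => h * ξ ^ l) '' {a : F | scalarFrob G p a 0})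
    (P : Set F) (hP0 : ∀ z ∈ P, z ≠ 0) (hP1 : (1 : F) ∈ P) :
    (∀ g ∈ G, g 0 = 0 → (⇑g '' P = P ∨ (⇑g '' P) ∩ P = ∅)) ↔
      (((∀ x ∈ P, ∀ y ∈ P, x * y ∈ P) ∧ (∀ x ∈ P, x⁻¹ ∈ P)) ∨
        ∃ (n e : ℕ), 0 < e ∧ e ∣ m ∧
          ∃ K : Set F, K ⊆ {a : F | scalarFrob G p a 0} ∧ (1 : F) ∈ K ∧
            (∀ x ∈ K, ∀ y ∈ K, x * y ∈ K) ∧ (∀ x ∈ K, x⁻¹ ∈ K) ∧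
            ∃ j : ℕ, j = n * m + l * ((p ^ (s * e) - 1) / (p ^ s - 1)) ∧
              (Set.ncard {a : F | scalarFrob G p a 0} / Set.ncard K ∣
                j * ((p ^ (e * s * (m / e)) - 1) / (p ^ (e * s) - 1)) / m) ∧
              P = {v : F | ∃ i < m / e, ∃ k ∈ K,
                v = (ξ ^ j) ^ ((p ^ (e * s * i) - 1) / (p ^ (e * s) - 1)) * k}) := by
  have h : Setting G p d s m l ξ := ⟨hp.ne_zero, hd, hcard, hAGL, h2trans, hs, hm, hξ0, hξgen, hH1⟩
  have hA : ∀ a b, a ≡ b [MOD Fintype.card F - 1] → a ∈ {n | ξ ^ n ∈ P} → b ∈ {n | ξ ^ n ∈ P} :=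
    fun a b hab (ha : ξ ^ a ∈ P) =>
      show ξ ^ b ∈ P from (pow_eq_pow_iff_modEq_card_sub_one hξ0 hξgen).mpr hab ▸ ha
  have h0 : 0 ∈ {n | ξ ^ n ∈ P} := by simpa using hP1
  rw [isBlock_iff_isExpBlock (pow_ne_zero s hp.ne_zero) hξgen hP0
      (fun _ hg hg0 => h.exists_pow_eq_of_map_zero hg hg0) (fun _ _ hc => h.exists_of_modEq hc),
    h.exponentModel.isExpBlock_iff hA h0,
    exists_subgroup_iff_isExpCanonical hξ0 hξgen (hp.two_le.trans (Nat.le_self_pow hs.1.1.ne' p))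
      hm.1.1 h.dvd_card_sub_one h.setOf_scalarFrob_zero_eq hP0]
  refine ⟨Or.inr, fun hP => hP.elim (fun hsub => ?_) id⟩
  exact (h.exponentModel.isExpBlock_iff hA h0).mp
    (isExpBlock_of_mul_mem hξ0 hξgen hP0 hP1 hsub.1 _ _ _)

/-- Lemma 3.10: let G ≤ AΓL(1,q) be 2-transitive on F_q, q = p^d, with s, m as in
Lemma 3.8, H = {a : t(a,0) ∈ G₀} and H₁ = {a : t(a,s) ∈ G₀} = Hξ^ℓ for a generator ξ
of F_q^× and ℓ coprime to m. A subset P of F_q^× containing 1 is an imprimitive block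
of G₀ on F_q^× iff either P is a subgroup of F_q^×, or there exist n ≥ 0, e ∣ m and
K ≤ H with |H|/|K| dividing j[ψ,m/e]/m such that P = K ∪ w^{[ψ,1]}K ∪ ⋯ ∪ w^{[ψ,m/e-1]}K,
where j = nm + ℓ[φ,e], w = ξ^j, φ = ζ^s and ψ = ζ^{es}. -/
theorem stmt_13 {F : Type*} [Field F] [Fintype F] (p d : ℕ) (hp : p.Prime) (hd : 0 < d)
    (hcard : Fintype.card F = p ^ d)
    (G : Subgroup (Equiv.Perm F))
    (hAGL : ∀ g ∈ G, ∃ (a c : F) (k : ℕ), ∀ z : F, g z = a * z ^ p ^ k + c)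
    (h2trans : ∀ x y x' y' : F, x ≠ y → x' ≠ y' → ∃ g ∈ G, g x = x' ∧ g y = y')
    (s : ℕ) (hs : IsLeast {k | 0 < k ∧ ∃ a : F, a ≠ 0 ∧ scalarFrob G p a k} s)
    (m : ℕ) (hm : IsLeast {k | 0 < k ∧ scalarFrob G p 1 (k * s)} m)
    (ξ : F) (hξ0 : ξ ≠ 0) (hξgen : ∀ z : F, z ≠ 0 → ∃ k : ℕ, ξ ^ k = z)
    (l : ℕ) (hl : 0 < l) (hlm : Nat.Coprime l m)
    (hH1 : {a : F | scalarFrob G p a s} =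
      (fun h : F => h * ξ ^ l) '' {a : F | scalarFrob G p a 0})
    (P : Set F) (hP0 : ∀ z ∈ P, z ≠ 0) (hP1 : (1 : F) ∈ P) :
    (∀ g ∈ G, g 0 = 0 → (⇑g '' P = P ∨ (⇑g '' P) ∩ P = ∅)) ↔
      (((∀ x ∈ P, ∀ y ∈ P, x * y ∈ P) ∧ (∀ x ∈ P, x⁻¹ ∈ P)) ∨
        ∃ (n e : ℕ), 0 < e ∧ e ∣ m ∧
          ∃ K : Set F, K ⊆ {a : F | scalarFrob G p a 0} ∧ (1 : F) ∈ K ∧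
            (∀ x ∈ K, ∀ y ∈ K, x * y ∈ K) ∧ (∀ x ∈ K, x⁻¹ ∈ K) ∧
            ∃ j : ℕ, j = n * m + l * ((p ^ (s * e) - 1) / (p ^ s - 1)) ∧
              (Set.ncard {a : F | scalarFrob G p a 0} / Set.ncard K ∣
                j * ((p ^ (e * s * (m / e)) - 1) / (p ^ (e * s) - 1)) / m) ∧
              P = {v : F | ∃ i < m / e, ∃ k ∈ K,
                v = (ξ ^ j) ^ ((p ^ (e * s * i) - 1) / (p ^ (e * s) - 1)) * k}) :=
  stmt_13_general p d hp hd hcard G hAGL h2trans s hs m hm ξ hξ0 hξgen l hH1 P hP0 hP1
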